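/- arXiv:2305.03531 — 4 statements merged into one kernel-verified Lean document; each statement's English description precedes it below -/
import Mathlib

section
/- For all real numbers β > 0, η ≥ 0 with βη ≤ 1, and every positive integer t, we have (1-βη)^t ≤ 2e · ((βt)^{-1} / ((βt)^{-1} + η))^2, i.e. (1-βη)^t ≤ 2e/(1+βtη)^2. -/
/-!
Since `1 - x ≤ exp (-x)`, the left side is at most `exp (-y)` with `y = βtη ≥ 0`. Comparing
`exp (1 + y)` with its quadratic Taylor polynomial gives `(1 + y)² ≤ 2 exp (1 + y) = 2e · exp y`,
which is the bound `exp (-y) ≤ 2e / (1 + y)²`.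
-/

open Real

theorem Real.one_sub_pow_le_exp_neg_mul {x : ℝ} (hx : x ≤ 1) (n : ℕ) :
    (1 - x) ^ n ≤ exp (-(n * x)) := by
  rw [neg_mul_eq_mul_neg, exp_nat_mul]
  exact pow_le_pow_left₀ (sub_nonneg.2 hx) (one_sub_le_exp_neg x) n

theorem Real.sq_le_two_mul_exp {z : ℝ} (hz : 0 ≤ z) : z ^ 2 ≤ 2 * exp z := by
  nlinarith [quadratic_le_exp_of_nonneg hz]

theorem Real.exp_neg_le_two_mul_exp_one_div_sq {y : ℝ} (hy : -1 < y) :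
    exp (-y) ≤ 2 * exp 1 / (1 + y) ^ 2 := by
  have hsq : (1 + y) ^ 2 ≤ 2 * exp 1 * exp y := by
    rw [mul_assoc, ← exp_add, add_comm 1 y]
    exact sq_le_two_mul_exp (by linarith)
  rw [exp_neg, le_div_iff₀ (by nlinarith), inv_mul_le_iff₀ (exp_pos y)]
  linarith

theorem inv_div_inv_add_eq_inv_one_add_mul {K : Type*} [Field K] {a : K} (ha : a ≠ 0) (b : K) :
    a⁻¹ / (a⁻¹ + b) = (1 + a * b)⁻¹ := by
  rw [← mul_div_mul_left _ _ ha, mul_inv_cancel₀ ha, mul_add, mul_inv_cancel₀ ha, one_div]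

/-- For `β > 0`, `η ≥ 0` with `βη ≤ 1`, and positive integer `t`,
`(1-βη)^t ≤ 2e·((βt)⁻¹/((βt)⁻¹+η))² = 2e/(1+βtη)²`. -/
theorem stmt2 (β η : ℝ) (t : ℕ) (hβ : 0 < β) (hη : 0 ≤ η) (hβη : β * η ≤ 1)
    (ht : 1 ≤ t) :
    (1 - β * η) ^ t ≤ 2 * Real.exp 1 * ((β * t)⁻¹ / ((β * t)⁻¹ + η)) ^ 2
    ∧ (1 - β * η) ^ t ≤ 2 * Real.exp 1 / (1 + β * t * η) ^ 2 := by
  have hβt : β * t ≠ 0 := by positivity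
  have hbound : (1 - β * η) ^ t ≤ 2 * exp 1 / (1 + β * t * η) ^ 2 :=
    calc (1 - β * η) ^ t ≤ exp (-(β * t * η)) := by
          simpa only [mul_left_comm _ β, mul_assoc] using one_sub_pow_le_exp_neg_mul hβη t
      _ ≤ 2 * exp 1 / (1 + β * t * η) ^ 2 :=
          exp_neg_le_two_mul_exp_one_div_sq (by linarith [show 0 ≤ β * t * η by positivity])
  refine ⟨?_, hbound⟩
  rwa [inv_div_inv_add_eq_inv_one_add_mul hβt, inv_pow, ← div_eq_mul_inv]
end

section
/- Let σ > 0 and let H_σ(ℝ^D) be the Gaussian RKHS with kernel k_σ(x−x') = exp(−‖x−x'‖²/(4σ²)), whose Fourier norm is ‖g‖²_{H_σ} = (2σ)^{-D} ∫ |ĝ(ω)|² e^{σ²‖ω‖²} dω. Then for every 0 < r < 1 and every g ∈ H_σ(ℝ^D), ‖g‖_{L^∞(ℝ^D)} ≤ C r^{-D/4} σ^{D(r−1)/2} ‖g‖_{L²(ℝ^D)}^{1−r} ‖g‖_{H_σ(ℝ^D)}^{r}, where C is a constant depending only on D. -/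
/-!
Fourier inversion bounds `‖g‖_∞` by `‖ĝ‖_{L¹}`. Factor
`|ĝ| = (|ĝ|²)^{(1-r)/2} (|ĝ|² e^{σ²‖ω‖²})^{r/2} (e^{-rσ²‖ω‖²})^{1/2}`; Hölder's inequality with
the exponents `(1-r)/2, r/2, 1/2` bounds `‖ĝ‖_{L¹}` by
`‖ĝ‖_{L²}^{1-r} (∫ |ĝ|² e^{σ²‖ω‖²})^{r/2} (π / (rσ²))^{D/4}`, Plancherel replaces `‖ĝ‖_{L²}` by
`‖g‖_{L²}`, and the leftover powers of `2` and `π` are absorbed into `C = 2^D π^{D/4}`.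
-/

open MeasureTheory Real
open scoped FourierTransform RealInnerProductSpace ENNReal

section Fourier

variable {V : Type*} [NormedAddCommGroup V] [InnerProductSpace ℝ V] [FiniteDimensional ℝ V]
  [MeasurableSpace V] [BorelSpace V]

theorem norm_le_integral_norm_fourier {E : Type*} [NormedAddCommGroup E] [NormedSpace ℂ E]
    [CompleteSpace E] {f : V → E} (hf : Integrable f) (hFf : Integrable (𝓕 f)) {x : V}
    (hx : ContinuousAt f x) : ‖f x‖ ≤ ∫ ξ, ‖𝓕 f ξ‖ := by
  rw [← hf.fourierInv_fourier_eq hFf hx, Real.fourierInv_eq]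
  simpa only [Circle.norm_smul] using
    norm_integral_le_integral_norm (fun ξ : V => 𝐞 ⟪ξ, x⟫ • 𝓕 f ξ)

theorem integral_norm_sq_fourier_of_integrable {H : Type*} [NormedAddCommGroup H]
    [InnerProductSpace ℂ H] [CompleteSpace H] {f : V → H} (hc : Continuous f) (hf : Integrable f)
    (hFf : Integrable (𝓕 f)) : ∫ ξ, ‖𝓕 f ξ‖ ^ 2 = ∫ x, ‖f x‖ ^ 2 := by
  have h := VectorFourier.integral_sesq_fourierIntegral_eq_neg_flip (innerSL ℂ)
    (L := innerₗ V) Real.continuous_fourierChar continuous_inner hf hFf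
  rw [flip_innerₗ] at h
  change ∫ ξ, inner ℂ (𝓕 f ξ) (𝓕 f ξ) = ∫ x, inner ℂ (f x) (𝓕⁻ (𝓕 f) x) at h
  rw [hc.fourierInv_fourier_eq hf hFf] at h
  apply Complex.ofRealLI.injective
  simpa [← LinearIsometry.integral_comp_comm, inner_self_eq_norm_sq_to_K] using h

end Fourier

section Interpolation

variable {α : Type*} [MeasurableSpace α] {μ : Measure α}

theorem ENNReal.lintegral_mul_mul_rpow_le {f g h : α → ℝ≥0∞} (hf : AEMeasurable f μ)
    (hg : AEMeasurable g μ) (hh : AEMeasurable h μ) {p q s : ℝ} (hp : 0 ≤ p) (hq : 0 ≤ q)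
    (hs : 0 ≤ s) (hpqs : p + q + s = 1) :
    ∫⁻ a, f a ^ p * g a ^ q * h a ^ s ∂μ ≤
      (∫⁻ a, f a ∂μ) ^ p * (∫⁻ a, g a ∂μ) ^ q * (∫⁻ a, h a ∂μ) ^ s := by
  have := ENNReal.lintegral_prod_norm_pow_le (μ := μ) Finset.univ (f := ![f, g, h])
    (p := ![p, q, s]) (by simp [Fin.forall_fin_succ, hf, hg, hh])
    (by simp [Fin.sum_univ_three, hpqs]) (by simp [Fin.forall_fin_succ, hp, hq, hs])
  simpa [Fin.prod_univ_three, mul_assoc] using this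

theorem ENNReal.sq_rpow_mul_rpow_mul_exp_rpow_eq_self (x : ℝ≥0∞) (u : ℝ) {r : ℝ} (hr0 : 0 ≤ r)
    (hr1 : r ≤ 1) :
    (x ^ 2) ^ ((1 - r) / 2) * (x ^ 2 * ENNReal.ofReal (exp u)) ^ (r / 2) *
      ENNReal.ofReal (exp (-(r * u))) ^ (1 / 2 : ℝ) = x := by
  have hexp : ∀ t s : ℝ, 0 ≤ s → ENNReal.ofReal (exp t) ^ s = ENNReal.ofReal (exp (t * s)) :=
    fun t s hs => by rw [ENNReal.ofReal_rpow_of_nonneg (exp_pos t).le hs, ← exp_mul]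
  rw [ENNReal.mul_rpow_of_nonneg _ _ (by linarith), hexp _ _ (by linarith), hexp _ _ (by norm_num),
    mul_assoc, mul_assoc, ← ENNReal.ofReal_mul (exp_pos _).le, ← exp_add,
    show u * (r / 2) + -(r * u) * (1 / 2) = 0 by ring, exp_zero, ENNReal.ofReal_one, mul_one,
    ← ENNReal.rpow_add_of_nonneg _ _ (by linarith) (by linarith), ← ENNReal.rpow_natCast,
    ← ENNReal.rpow_mul, Nat.cast_ofNat, show (2 : ℝ) * ((1 - r) / 2 + r / 2) = 1 by ring,
    ENNReal.rpow_one]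

theorem lintegral_le_interpolation_exp_weight {f : α → ℝ≥0∞} {u : α → ℝ} (hf : AEMeasurable f μ)
    (hu : AEMeasurable u μ) {r : ℝ} (hr0 : 0 ≤ r) (hr1 : r ≤ 1) :
    ∫⁻ a, f a ∂μ ≤ (∫⁻ a, f a ^ 2 ∂μ) ^ ((1 - r) / 2) *
      (∫⁻ a, f a ^ 2 * ENNReal.ofReal (exp (u a)) ∂μ) ^ (r / 2) *
      (∫⁻ a, ENNReal.ofReal (exp (-(r * u a))) ∂μ) ^ (1 / 2 : ℝ) := by
  have hw : ∀ t : α → ℝ, AEMeasurable t μ →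
      AEMeasurable (fun a => ENNReal.ofReal (exp (t a))) μ :=
    fun t ht => (measurable_exp.comp_aemeasurable ht).ennreal_ofReal
  calc ∫⁻ a, f a ∂μ = ∫⁻ a, (f a ^ 2) ^ ((1 - r) / 2) *
        (f a ^ 2 * ENNReal.ofReal (exp (u a))) ^ (r / 2) *
        ENNReal.ofReal (exp (-(r * u a))) ^ (1 / 2 : ℝ) ∂μ := by
        simp only [ENNReal.sq_rpow_mul_rpow_mul_exp_rpow_eq_self _ _ hr0 hr1]
    _ ≤ _ := ENNReal.lintegral_mul_mul_rpow_le (hf.pow_const 2) ((hf.pow_const 2).mul (hw u hu))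
        (hw _ (hu.const_mul r).neg) (by linarith) (by linarith) (by norm_num) (by ring)

theorem integral_le_interpolation_exp_weight {f u : α → ℝ} (hf0 : ∀ a, 0 ≤ f a)
    (hf : AEMeasurable f μ) (hu : AEMeasurable u μ) {r : ℝ} (hr0 : 0 ≤ r) (hr1 : r ≤ 1)
    (hf2 : Integrable (fun a => f a ^ 2) μ) (hf2u : Integrable (fun a => f a ^ 2 * exp (u a)) μ)
    (hru : Integrable (fun a => exp (-(r * u a))) μ) :
    ∫ a, f a ∂μ ≤ (∫ a, f a ^ 2 ∂μ) ^ ((1 - r) / 2) * (∫ a, f a ^ 2 * exp (u a) ∂μ) ^ (r / 2) *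
      (∫ a, exp (-(r * u a)) ∂μ) ^ (1 / 2 : ℝ) := by
  have key := lintegral_le_interpolation_exp_weight hf.ennreal_ofReal hu hr0 hr1
  simp only [← ENNReal.ofReal_pow (hf0 _), ← ENNReal.ofReal_mul (pow_nonneg (hf0 _) 2)] at key
  rw [← ofReal_integral_eq_lintegral_ofReal hf2 (ae_of_all _ fun a => by positivity),
    ← ofReal_integral_eq_lintegral_ofReal hf2u (ae_of_all _ fun a => by positivity),
    ← ofReal_integral_eq_lintegral_ofReal hru (ae_of_all _ fun a => by positivity),
    ENNReal.ofReal_rpow_of_nonneg (integral_nonneg fun a => by positivity) (by linarith),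
    ENNReal.ofReal_rpow_of_nonneg (integral_nonneg fun a => by positivity) (by linarith),
    ENNReal.ofReal_rpow_of_nonneg (integral_nonneg fun a => by positivity) (by norm_num),
    ← ENNReal.ofReal_mul (by positivity), ← ENNReal.ofReal_mul (by positivity)] at key
  rw [integral_eq_lintegral_of_nonneg_ae (ae_of_all _ hf0) hf.aestronglyMeasurable]
  exact ENNReal.toReal_le_of_le_ofReal (by positivity) key

end Interpolation

theorem pi_div_mul_sq_rpow_le (D : ℕ) {σ r : ℝ} (hσ : 0 < σ) (hr0 : 0 < r) (hr2 : r ≤ 2) :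
    (π / (r * σ ^ 2)) ^ ((D : ℝ) / 4) ≤
      2 ^ (D : ℝ) * π ^ ((D : ℝ) / 4) * r ^ (-(D : ℝ) / 4) * σ ^ ((D : ℝ) * (r - 1) / 2) *
        ((2 * σ) ^ (-(D : ℝ))) ^ (r / 2) := by
  have h2σ : 0 < 2 * σ := by positivity
  rw [rpow_def_of_pos (by positivity), rpow_def_of_pos two_pos, rpow_def_of_pos pi_pos,
    rpow_def_of_pos hr0, rpow_def_of_pos hσ, rpow_def_of_pos (rpow_pos_of_pos h2σ _),
    log_rpow h2σ, log_div pi_pos.ne' (by positivity), log_mul hr0.ne' (by positivity), log_pow,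
    log_mul two_ne_zero hσ.ne']
  simp only [← exp_add]
  -- the right side is `2 ^ (D * (1 - r / 2))` times the left side
  apply exp_le_exp.2
  have hD : (0 : ℝ) ≤ D := D.cast_nonneg
  have hl2 : 0 ≤ log 2 := log_nonneg one_le_two
  push_cast
  nlinarith [mul_nonneg (mul_nonneg hD hl2) (by linarith : (0 : ℝ) ≤ 2 - r)]

theorem stmt12_general (D : ℕ) :
    ∃ C > 0, ∀ σ : ℝ, 0 < σ → ∀ r : ℝ, 0 < r → r < 1 →
      ∀ g : EuclideanSpace ℝ (Fin D) → ℂ,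
        Continuous g → Integrable g → Integrable (fun x => ‖g x‖ ^ 2) →
        Integrable (𝓕 g) →
        Integrable (fun ω : EuclideanSpace ℝ (Fin D) =>
          ‖𝓕 g ω‖ ^ 2 * Real.exp (σ ^ 2 * ‖ω‖ ^ 2)) →
        ∀ x, ‖g x‖ ≤ C * r ^ (-(D : ℝ) / 4) * σ ^ ((D : ℝ) * (r - 1) / 2) *
          (∫ x : EuclideanSpace ℝ (Fin D), ‖g x‖ ^ 2) ^ ((1 - r) / 2) *
          ((2 * σ) ^ (-(D : ℝ)) * ∫ ω : EuclideanSpace ℝ (Fin D),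
            ‖𝓕 g ω‖ ^ 2 * Real.exp (σ ^ 2 * ‖ω‖ ^ 2)) ^ (r / 2) := by
  refine ⟨2 ^ (D : ℝ) * π ^ ((D : ℝ) / 4), by positivity, ?_⟩
  intro σ hσ r hr0 hr1 g hgc hgi _ hFi hFw x
  have hgauss : ∫ ω : EuclideanSpace ℝ (Fin D), exp (-(r * (σ ^ 2 * ‖ω‖ ^ 2))) =
      (π / (r * σ ^ 2)) ^ ((D : ℝ) / 2) := by
    simp_rw [fun ω : EuclideanSpace ℝ (Fin D) =>
      show -(r * (σ ^ 2 * ‖ω‖ ^ 2)) = -(r * σ ^ 2) * ‖ω‖ ^ 2 by ring]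
    rw [GaussianFourier.integral_rexp_neg_mul_sq_norm (by positivity), finrank_euclideanSpace_fin]
  have hFsq : Integrable (fun ω => ‖𝓕 g ω‖ ^ 2) := by
    refine hFw.mono' (hFi.norm.aestronglyMeasurable.pow 2) (ae_of_all _ fun ω => ?_)
    rw [norm_pow, norm_norm]
    exact le_mul_of_one_le_right (by positivity) (one_le_exp (by positivity))
  have hinterp := integral_le_interpolation_exp_weight (fun ω => norm_nonneg (𝓕 g ω))
    hFi.norm.aemeasurable (by fun_prop) hr0.le hr1.le hFsq hFw
    (.of_integral_ne_zero (by rw [hgauss]; positivity))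
  rw [integral_norm_sq_fourier_of_integrable hgc hgi hFi, hgauss, ← rpow_mul (by positivity),
    show (D : ℝ) / 2 * (1 / 2) = D / 4 by ring] at hinterp
  rw [mul_rpow (by positivity) (integral_nonneg fun ω => by positivity)]
  calc ‖g x‖ ≤ ∫ ω, ‖𝓕 g ω‖ := norm_le_integral_norm_fourier hgi hFi hgc.continuousAt
    _ ≤ _ := hinterp
    _ ≤ _ := by
      have hL2 : 0 ≤ ∫ y, ‖g y‖ ^ 2 := integral_nonneg fun y => by positivity
      have hW : 0 ≤ ∫ ω, ‖𝓕 g ω‖ ^ 2 * exp (σ ^ 2 * ‖ω‖ ^ 2) :=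
        integral_nonneg fun ω => by positivity
      have hconst := pi_div_mul_sq_rpow_le D hσ hr0 (by linarith)
      have hbound := mul_le_mul_of_nonneg_right hconst
        (mul_nonneg (rpow_nonneg hL2 ((1 - r) / 2)) (rpow_nonneg hW (r / 2)))
      linarith

/-- Interpolation inequality for the Gaussian RKHS with
`‖g‖²_{H_σ} = (2σ)^{-D} ∫ |ĝ(ω)|² e^{σ²‖ω‖²} dω`: there is a constant `C`
depending only on `D` such that for every `σ > 0`, `0 < r < 1`, and `g`,
`‖g‖_{L^∞} ≤ C r^{-D/4} σ^{D(r−1)/2} ‖g‖_{L²}^{1−r} ‖g‖_{H_σ}^{r}`. -/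
theorem stmt12 (D : ℕ) (hD : 1 ≤ D) :
    ∃ C > 0, ∀ σ : ℝ, 0 < σ → ∀ r : ℝ, 0 < r → r < 1 →
      ∀ g : EuclideanSpace ℝ (Fin D) → ℂ,
        Continuous g → Integrable g → Integrable (fun x => ‖g x‖ ^ 2) →
        Integrable (𝓕 g) →
        Integrable (fun ω : EuclideanSpace ℝ (Fin D) =>
          ‖𝓕 g ω‖ ^ 2 * Real.exp (σ ^ 2 * ‖ω‖ ^ 2)) →
        ∀ x, ‖g x‖ ≤ C * r ^ (-(D : ℝ) / 4) * σ ^ ((D : ℝ) * (r - 1) / 2) *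
          (∫ x : EuclideanSpace ℝ (Fin D), ‖g x‖ ^ 2) ^ ((1 - r) / 2) *
          ((2 * σ) ^ (-(D : ℝ)) * ∫ ω : EuclideanSpace ℝ (Fin D),
            ‖𝓕 g ω‖ ^ 2 * Real.exp (σ ^ 2 * ‖ω‖ ^ 2)) ^ (r / 2) :=
  stmt12_general D
end

section
/- Let m > D/2 and M ≥ 1. Then the D-dimensional tail sum satisfies ∑_{ζ ∈ ℕ^D, max_j ζ_j ≥ M+1, all ζ_j ≥ M+1} (1 + ‖ζ‖²/m)^{-m} ≤ C (2m−D)^{-1} m^{m} M^{-2m+D}, where C depends only on D. More precisely, ∫_M^∞ ⋯ ∫_M^∞ (1+‖ζ‖²/m)^{-m} dζ ≤ C (2m−D)^{-1} m^m M^{D−2m}. -/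
/-!
Where every coordinate is at least `M`, also `‖ζ‖ ≥ M`, and there
`(1 + ‖ζ‖²/m)^{-m} ≤ m^m ‖ζ‖^{-2m}`. Integrating this radial bound in polar coordinates gives
`D · vol(B) · m^m ∫_M^∞ r^{D-1-2m} dr = D · vol(B) · m^m M^{D-2m} / (2m - D)`, with `B` the
unit ball.
The lattice sum is dominated by the same integral: the weight decreases in `‖ζ‖`, so its value
at a lattice point `p` is at most its value anywhere on the unit cube `(p - 1, p]`, and these
cubes are disjoint and lie in the region of integration.
-/

open MeasureTheory Set Metric Module

lemma tsum_le_of_tsum_ofReal_le {α : Type*} {f : α → ℝ} (hf : ∀ a, 0 ≤ f a) {b : ℝ}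
    (hb : 0 ≤ b) (h : ∑' a, ENNReal.ofReal (f a) ≤ ENNReal.ofReal b) : ∑' a, f a ≤ b := by
  rw [← tsum_congr fun a ↦ ENNReal.toReal_ofReal (hf a),
    ← ENNReal.tsum_toReal_eq fun _ ↦ ENNReal.ofReal_ne_top]
  exact ENNReal.toReal_le_of_le_ofReal hb h

lemma one_add_sq_div_rpow_neg_le {m r : ℝ} (hm : 0 < m) (hr : 0 < r) :
    (1 + r ^ 2 / m) ^ (-m) ≤ m ^ m * r ^ (-(2 * m)) :=
  calc (1 + r ^ 2 / m) ^ (-m) ≤ (r ^ 2 / m) ^ (-m) :=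
        Real.rpow_le_rpow_of_nonpos (by positivity) (by linarith) (by linarith)
    _ = m ^ m * r ^ (-(2 * m)) := by
        rw [Real.div_rpow (by positivity) hm.le, Real.rpow_neg hm.le m, div_inv_eq_mul, mul_comm,
          ← Real.rpow_natCast, ← Real.rpow_mul hr.le]
        ring_nf

lemma antitoneOn_one_add_div_rpow_neg {m : ℝ} (hm : 0 < m) :
    AntitoneOn (fun t : ℝ ↦ (1 + t / m) ^ (-m)) (Ici 0) := fun a ha _ _ hab ↦
  Real.rpow_le_rpow_of_nonpos (by have : 0 ≤ a / m := div_nonneg ha hm.le; linarith)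
    (by gcongr) (by linarith)

lemma pow_pred_smul_indicator_rpow_neg_eqOn {n : ℕ} (hn : 1 ≤ n) {s M : ℝ} :
    EqOn (fun y : ℝ ↦ y ^ (n - 1) • (Ici M).indicator (fun r ↦ r ^ (-s)) y)
      ((Ici M).indicator fun y ↦ y ^ ((n : ℝ) - 1 - s)) (Ioi 0) := by
  intro y (hy : 0 < y)
  by_cases hyM : y ∈ Ici M
  · simp only [indicator_of_mem hyM, smul_eq_mul]
    rw [← Real.rpow_natCast, Nat.cast_pred hn, ← Real.rpow_add hy, ← sub_eq_add_neg]
  · simp [indicator_of_notMem hyM]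

section RadialTail

variable {E : Type*} [NormedAddCommGroup E] [NormedSpace ℝ E] [FiniteDimensional ℝ E]
  [Nontrivial E] [MeasurableSpace E] [BorelSpace E] (μ : Measure E) [μ.IsAddHaarMeasure]
  {s M : ℝ}

lemma integrable_indicator_Ici_norm_rpow_neg (hs : finrank ℝ E < s) (hM : 0 < M) :
    Integrable (fun x : E ↦ (Ici M).indicator (fun r ↦ r ^ (-s)) ‖x‖) μ := by
  rw [integrable_fun_norm_addHaar μ,
    integrableOn_congr_fun (pow_pred_smul_indicator_rpow_neg_eqOn finrank_pos) measurableSet_Ioi,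
    IntegrableOn, integrable_indicator_iff measurableSet_Ici, IntegrableOn,
    Measure.restrict_restrict measurableSet_Ici, inter_eq_left.2 (Ici_subset_Ioi.2 hM),
    ← IntegrableOn, integrableOn_Ici_iff_integrableOn_Ioi]
  exact integrableOn_Ioi_rpow_of_lt (by linarith) hM

lemma integral_indicator_Ici_norm_rpow_neg (hs : finrank ℝ E < s) (hM : 0 < M) :
    ∫ x, (Ici M).indicator (fun r ↦ r ^ (-s)) ‖x‖ ∂μ
      = finrank ℝ E * μ.real (ball 0 1) * (M ^ ((finrank ℝ E : ℝ) - s) / (s - finrank ℝ E)) := by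
  rw [integral_fun_norm_addHaar μ, nsmul_eq_mul, smul_eq_mul,
    setIntegral_congr_fun measurableSet_Ioi (pow_pred_smul_indicator_rpow_neg_eqOn finrank_pos),
    setIntegral_indicator measurableSet_Ici, inter_eq_right.2 (Ici_subset_Ioi.2 hM),
    integral_Ici_eq_integral_Ioi, integral_Ioi_rpow_of_lt (by linarith) hM, mul_assoc]
  congr 2
  rw [show (finrank ℝ E : ℝ) - 1 - s + 1 = -(s - finrank ℝ E) by ring, neg_div_neg_eq, neg_sub]

lemma setLIntegral_norm_ge_one_add_sq_div_rpow_neg_le {m : ℝ} (hm : finrank ℝ E < 2 * m)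
    (hM : 0 < M) :
    ∫⁻ x in {x : E | M ≤ ‖x‖}, ENNReal.ofReal ((1 + ‖x‖ ^ 2 / m) ^ (-m)) ∂μ
      ≤ ENNReal.ofReal (finrank ℝ E * μ.real (ball 0 1) * (2 * m - finrank ℝ E)⁻¹ * m ^ m
          * M ^ ((finrank ℝ E : ℝ) - 2 * m)) := by
  have hm0 : 0 < m := by linarith [(finrank ℝ E).cast_nonneg (α := ℝ)]
  set g : E → ℝ := fun x ↦ m ^ m * (Ici M).indicator (fun r ↦ r ^ (-(2 * m))) ‖x‖
  have hg_nonneg : 0 ≤ g := fun x ↦ mul_nonneg (by positivity) <|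
    indicator_nonneg (fun r (hr : M ≤ r) ↦ Real.rpow_nonneg (hM.le.trans hr) _) _
  calc ∫⁻ x in {x : E | M ≤ ‖x‖}, ENNReal.ofReal ((1 + ‖x‖ ^ 2 / m) ^ (-m)) ∂μ
      ≤ ∫⁻ x in {x : E | M ≤ ‖x‖}, ENNReal.ofReal (g x) ∂μ := by
        refine setLIntegral_mono' (measurableSet_le measurable_const measurable_norm) fun x hx ↦ ?_
        have hxM : ‖x‖ ∈ Ici M := hx
        rw [show g x = m ^ m * ‖x‖ ^ (-(2 * m)) from congrArg _ (indicator_of_mem hxM _)]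
        exact ENNReal.ofReal_le_ofReal (one_add_sq_div_rpow_neg_le hm0 (hM.trans_le hx))
    _ ≤ ∫⁻ x, ENNReal.ofReal (g x) ∂μ := setLIntegral_le_lintegral _ _
    _ = ENNReal.ofReal (∫ x, g x ∂μ) :=
        (ofReal_integral_eq_lintegral_ofReal
          ((integrable_indicator_Ici_norm_rpow_neg μ hm hM).const_mul _)
          (.of_forall hg_nonneg)).symm
    _ = _ := by
        rw [integral_const_mul, integral_indicator_Ici_norm_rpow_neg μ hm hM]
        ring_nf

end RadialTail

section LatticeSum

variable {ι : Type*}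

def lowerUnitCube (p : ι → ℕ) : Set (EuclideanSpace ℝ ι) :=
  WithLp.ofLp ⁻¹' univ.pi fun j ↦ Ioc ((p j : ℝ) - 1) (p j)

lemma measurableSet_lowerUnitCube [Fintype ι] (p : ι → ℕ) : MeasurableSet (lowerUnitCube p) :=
  (MeasurableSet.univ_pi fun _ ↦ measurableSet_Ioc).preimage
    (PiLp.volume_preserving_ofLp ι).measurable

lemma volume_lowerUnitCube [Fintype ι] (p : ι → ℕ) : volume (lowerUnitCube p) = 1 := by
  rw [lowerUnitCube, (PiLp.volume_preserving_ofLp ι).measure_preimage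
    (MeasurableSet.univ_pi fun _ ↦ measurableSet_Ioc).nullMeasurableSet, volume_pi_pi]
  simp [Real.volume_Ioc]

lemma pairwise_disjoint_lowerUnitCube :
    Pairwise (Function.onFun Disjoint (lowerUnitCube (ι := ι))) := by
  intro p q hpq
  obtain ⟨j, hj⟩ := Function.ne_iff.mp hpq
  refine disjoint_left.2 fun x hxp hxq ↦ hj ?_
  obtain ⟨hp₁, hp₂⟩ := hxp j (mem_univ _)
  obtain ⟨hq₁, hq₂⟩ := hxq j (mem_univ _)
  have hpq : p j < q j + 1 := by exact_mod_cast (show (p j : ℝ) < q j + 1 by linarith)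
  have hqp : q j < p j + 1 := by exact_mod_cast (show (q j : ℝ) < p j + 1 by linarith)
  omega

lemma tsum_le_setLIntegral_of_antitoneOn [Fintype ι] {φ : ℝ → ℝ} (hφ : AntitoneOn φ (Ici 0))
    (M : ℕ) :
    ∑' p : {ζ : ι → ℕ // ∀ j, M + 1 ≤ ζ j}, ENNReal.ofReal (φ (∑ j, (p.1 j : ℝ) ^ 2))
      ≤ ∫⁻ x in {x : EuclideanSpace ℝ ι | ∀ j, (M : ℝ) ≤ x j}, ENNReal.ofReal (φ (‖x‖ ^ 2)) := by
  have hcube_mem {p : ι → ℕ} (hp : ∀ j, M + 1 ≤ p j) {x} (hx : x ∈ lowerUnitCube p) (j : ι) :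
      (M : ℝ) ≤ x j ∧ x j ≤ p j := by
    obtain ⟨hx₁, hx₂⟩ := hx j (mem_univ _)
    have : (M : ℝ) + 1 ≤ p j := by exact_mod_cast hp j
    exact ⟨by linarith, hx₂⟩
  calc ∑' p : {ζ : ι → ℕ // ∀ j, M + 1 ≤ ζ j}, ENNReal.ofReal (φ (∑ j, (p.1 j : ℝ) ^ 2))
      ≤ ∑' p : {ζ : ι → ℕ // ∀ j, M + 1 ≤ ζ j},
          ∫⁻ x in lowerUnitCube p.1, ENNReal.ofReal (φ (‖x‖ ^ 2)) := by
        refine ENNReal.tsum_le_tsum fun p ↦ ?_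
        rw [← mul_one (ENNReal.ofReal _), ← volume_lowerUnitCube p.1, ← setLIntegral_const]
        refine setLIntegral_mono' (measurableSet_lowerUnitCube _) fun x hx ↦
          ENNReal.ofReal_le_ofReal (hφ (mem_Ici.2 (by positivity)) (mem_Ici.2 (by positivity)) ?_)
        rw [EuclideanSpace.real_norm_sq_eq]
        refine Finset.sum_le_sum fun j _ ↦ ?_
        obtain ⟨hMx, hxp⟩ := hcube_mem p.2 hx j
        exact pow_le_pow_left₀ ((M.cast_nonneg).trans hMx) hxp 2
    _ = ∫⁻ x in ⋃ p : {ζ : ι → ℕ // ∀ j, M + 1 ≤ ζ j}, lowerUnitCube p.1,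
          ENNReal.ofReal (φ (‖x‖ ^ 2)) :=
        (lintegral_iUnion (s := fun p : {ζ : ι → ℕ // ∀ j, M + 1 ≤ ζ j} ↦ lowerUnitCube p.1)
          (fun p ↦ measurableSet_lowerUnitCube p.1)
          (fun p q hpq ↦ pairwise_disjoint_lowerUnitCube (Subtype.val_injective.ne hpq)) _).symm
    _ ≤ _ := lintegral_mono_set <| iUnion_subset fun p _ hx j ↦ (hcube_mem p.2 hx j).1

end LatticeSum

/-- Tail estimate for the scaled Sobolev weight: for `m > D/2` and `M ≥ 1`,
the sum over `ζ ∈ ℕ^D` with all coordinates `≥ M+1` of `(1+‖ζ‖²/m)^{-m}` is at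
most `C (2m−D)^{-1} m^m M^{D−2m}`, and so is the corresponding integral over
`[M,∞)^D`, with `C` depending only on `D`. -/
theorem stmt13 (D : ℕ) (hD : 1 ≤ D) :
    ∃ C > 0, ∀ m : ℝ, (D : ℝ) / 2 < m → ∀ M : ℕ, 1 ≤ M →
      (∑' p : {ζ : Fin D → ℕ // ∀ j, M + 1 ≤ ζ j},
          (1 + (∑ j, ((p.1 j : ℝ)) ^ 2) / m) ^ (-m))
        ≤ C * (2 * m - D)⁻¹ * m ^ m * (M : ℝ) ^ ((D : ℝ) - 2 * m)
      ∧ (∫ ζ in {ζ : EuclideanSpace ℝ (Fin D) | ∀ j, (M : ℝ) ≤ ζ j},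
            (1 + ‖ζ‖ ^ 2 / m) ^ (-m))
        ≤ C * (2 * m - D)⁻¹ * m ^ m * (M : ℝ) ^ ((D : ℝ) - 2 * m) := by
  have : Nonempty (Fin D) := ⟨⟨0, hD⟩⟩
  have hball : 0 < volume.real (ball (0 : EuclideanSpace ℝ (Fin D)) 1) :=
    ENNReal.toReal_pos (measure_ball_pos _ _ one_pos).ne' measure_ball_lt_top.ne
  refine ⟨D * volume.real (ball (0 : EuclideanSpace ℝ (Fin D)) 1), by positivity,
    fun m hm M hM ↦ ?_⟩
  have hm0 : 0 < m := by linarith [(D.cast_nonneg : (0 : ℝ) ≤ D)]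
  have hM0 : (0 : ℝ) < M := by exact_mod_cast hM
  have hT : {ζ : EuclideanSpace ℝ (Fin D) | ∀ j, (M : ℝ) ≤ ζ j} ⊆ {ζ | (M : ℝ) ≤ ‖ζ‖} :=
    fun ζ hζ ↦ (hζ ⟨0, hD⟩).trans ((le_abs_self _).trans (PiLp.norm_apply_le ζ _))
  have hbound := (lintegral_mono_set (μ := volume) hT).trans
    (setLIntegral_norm_ge_one_add_sq_div_rpow_neg_le volume
      (by rwa [finrank_euclideanSpace_fin, ← div_lt_iff₀' two_pos]) hM0)
  rw [finrank_euclideanSpace_fin] at hbound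
  have hRHS : 0 ≤ D * volume.real (ball (0 : EuclideanSpace ℝ (Fin D)) 1) * (2 * m - D)⁻¹
      * m ^ m * (M : ℝ) ^ ((D : ℝ) - 2 * m) := by
    have : 0 < 2 * m - D := by linarith
    positivity
  constructor
  · exact tsum_le_of_tsum_ofReal_le (fun p ↦ by positivity) hRHS
      ((tsum_le_setLIntegral_of_antitoneOn (antitoneOn_one_add_div_rpow_neg hm0) M).trans hbound)
  · rw [integral_eq_lintegral_of_nonneg_ae (.of_forall fun ζ ↦ by positivity)
      (by fun_prop : Measurable _).aestronglyMeasurable]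
    exact ENNReal.toReal_le_of_le_ofReal hRHS hbound
end

section
/- Let K: ℝ^D → ℝ be a continuous integrable positive definite kernel with Fourier transform F(K), and let ε, ε' be i.i.d. random vectors with characteristic function φ. Define the smoothed kernel K̃_S(x) = E[K(x + ε − ε')]. Then the Fourier transform of K̃_S satisfies F(K̃_S)(ω) = F(K)(ω)·|φ(ω)|² for all ω ∈ ℝ^D. -/
/-!
Let `ν` be the law of `ε - ε'`, so that the smoothed kernel is `x ↦ ∫ K (x + y) dν(y)`.
By Fubini and the translation invariance of Lebesgue measure, its Fourier transform is
`F(K)(ω)` times the characteristic function of `ν` at `ω`. By independence, and since `ε'`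
has the law of `ε`, that characteristic function is `φ(ω) · conj φ(ω) = |φ(ω)|²`.
-/

open MeasureTheory
open scoped RealInnerProductSpace

/-- The Fourier transform with the convention
`F(f)(ω) = (2π)^{-D/2} ∫ f(x) e^{-i⟨ω,x⟩} dx`. -/
noncomputable def ftransform (D : ℕ) (f : EuclideanSpace ℝ (Fin D) → ℂ)
    (ω : EuclideanSpace ℝ (Fin D)) : ℂ :=
  (((2 * Real.pi) ^ (-(D : ℝ) / 2) : ℝ) : ℂ) *
    ∫ x, f x * Complex.exp (-(Complex.I * ((⟪ω, x⟫ : ℝ) : ℂ)))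

open Complex ComplexConjugate ProbabilityTheory

section FourierTranslation

variable {E : Type*} [NormedAddCommGroup E] [InnerProductSpace ℝ E]

lemma norm_cexp_neg_I_mul_inner (ω x : E) : ‖cexp (-(I * ⟪ω, x⟫))‖ = 1 := by
  rw [norm_exp]; simp

variable [MeasurableSpace E] [BorelSpace E] {μ : Measure E}

lemma integral_comp_add_right_mul_cexp_neg_inner [μ.IsAddRightInvariant] (f : E → ℂ)
    (c ω : E) :
    ∫ x, f (x + c) * cexp (-(I * ⟪ω, x⟫)) ∂μ
      = (∫ x, f x * cexp (-(I * ⟪ω, x⟫)) ∂μ) * cexp (⟪c, ω⟫ * I) := by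
  rw [← integral_mul_const, ← integral_add_right_eq_self
    (fun x ↦ f x * cexp (-(I * ⟪ω, x⟫)) * cexp (⟪c, ω⟫ * I)) c]
  congr 1 with x
  rw [mul_assoc, ← Complex.exp_add, inner_add_right, real_inner_comm c]
  congr 2
  push_cast
  ring

variable [SecondCountableTopology E] {ν : Measure E}

lemma integrable_prod_comp_add_mul_cexp_neg_inner [SFinite μ] [μ.IsAddRightInvariant]
    [IsFiniteMeasure ν] {f : E → ℂ} (hf : Integrable f μ) (hf_meas : StronglyMeasurable f)
    (ω : E) :
    Integrable (fun p : E × E ↦ f (p.1 + p.2) * cexp (-(I * ⟪ω, p.1⟫))) (μ.prod ν) := by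
  have hmeas : AEStronglyMeasurable
      (fun p : E × E ↦ f (p.1 + p.2) * cexp (-(I * ⟪ω, p.1⟫))) (μ.prod ν) :=
    ((hf_meas.comp_measurable measurable_add).aestronglyMeasurable).mul (by fun_prop)
  refine (integrable_prod_iff' hmeas).2 ⟨ae_of_all _ fun y ↦ ?_, ?_⟩
  · exact (hf.comp_add_right y).mul_bdd (by fun_prop)
      (ae_of_all _ fun x ↦ (norm_cexp_neg_I_mul_inner ω x).le)
  · simp only [norm_mul, norm_cexp_neg_I_mul_inner, mul_one,
      integral_add_right_eq_self (fun x ↦ ‖f x‖)]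
    exact integrable_const _

lemma integral_integral_comp_add_mul_cexp_neg_inner [SFinite μ] [μ.IsAddRightInvariant]
    [IsFiniteMeasure ν] {f : E → ℂ} (hf : Integrable f μ) (hf_meas : StronglyMeasurable f)
    (ω : E) :
    ∫ x, (∫ y, f (x + y) ∂ν) * cexp (-(I * ⟪ω, x⟫)) ∂μ
      = (∫ x, f x * cexp (-(I * ⟪ω, x⟫)) ∂μ) * charFun ν ω := by
  calc ∫ x, (∫ y, f (x + y) ∂ν) * cexp (-(I * ⟪ω, x⟫)) ∂μ
      = ∫ y, ∫ x, f (x + y) * cexp (-(I * ⟪ω, x⟫)) ∂μ ∂ν := by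
        simp_rw [← integral_mul_const]
        exact integral_integral_swap
          (integrable_prod_comp_add_mul_cexp_neg_inner hf hf_meas ω)
    _ = ∫ y, (∫ x, f x * cexp (-(I * ⟪ω, x⟫)) ∂μ) * cexp (⟪y, ω⟫ * I) ∂ν := by
        simp_rw [integral_comp_add_right_mul_cexp_neg_inner]
    _ = (∫ x, f x * cexp (-(I * ⟪ω, x⟫)) ∂μ) * charFun ν ω := by
        rw [integral_const_mul, charFun_apply]

end FourierTranslation

lemma ProbabilityTheory.IndepFun.charFun_map_sub_of_map_eq {Ω E : Type*}
    {mΩ : MeasurableSpace Ω} {μ : Measure Ω} [IsFiniteMeasure μ]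
    [NormedAddCommGroup E] [InnerProductSpace ℝ E] [MeasurableSpace E] [BorelSpace E]
    [SecondCountableTopology E] {X Y : Ω → E}
    (hX : AEMeasurable X μ) (hY : AEMeasurable Y μ) (hXY : IndepFun X Y μ)
    (hlaw : μ.map X = μ.map Y) (t : E) :
    charFun (μ.map (X - Y)) t = ((‖charFun (μ.map X) t‖ ^ 2 : ℝ) : ℂ) := by
  have hneg : charFun (μ.map (-Y)) t = conj (charFun (μ.map X) t) := by
    simpa [Pi.neg_def, hlaw] using charFun_map_smul_comp hY (-1) t
  rw [sub_eq_add_neg, (hXY.comp measurable_id measurable_neg).charFun_map_add_eq_mul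
    hX hY.neg, Pi.mul_apply, hneg, mul_conj, normSq_eq_norm_sq]

theorem stmt15_general {Ω : Type*} [MeasurableSpace Ω] (μ : Measure Ω)
    [IsProbabilityMeasure μ] (D : ℕ)
    (K : EuclideanSpace ℝ (Fin D) → ℂ) (hK_cont : Continuous K)
    (hK_int : Integrable K)
    (ε ε' : Ω → EuclideanSpace ℝ (Fin D))
    (hε : Measurable ε) (hε' : Measurable ε')
    (hindep : ProbabilityTheory.IndepFun ε ε' μ)
    (hid : Measure.map ε μ = Measure.map ε' μ)
    (φ : EuclideanSpace ℝ (Fin D) → ℂ)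
    (hφ : ∀ ω : EuclideanSpace ℝ (Fin D),
      φ ω = ∫ a, Complex.exp (Complex.I * ((⟪ω, ε a⟫ : ℝ) : ℂ)) ∂μ) :
    ∀ ω : EuclideanSpace ℝ (Fin D),
      ftransform D (fun x => ∫ a, K (x + ε a - ε' a) ∂μ) ω
        = ftransform D K ω * ((‖φ ω‖ ^ 2 : ℝ) : ℂ) := by
  intro ω
  have hφ_charFun : φ ω = charFun (μ.map ε) ω := by
    rw [hφ, charFun_apply, integral_map hε.aemeasurable (by fun_prop)]
    simp_rw [real_inner_comm ω, mul_comm I]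
  have hsmooth : (fun x ↦ ∫ a, K (x + ε a - ε' a) ∂μ)
      = fun x ↦ ∫ y, K (x + y) ∂(μ.map (ε - ε')) := by
    ext x
    rw [integral_map (hε.sub hε').aemeasurable (by fun_prop)]
    simp_rw [Pi.sub_apply, add_sub_assoc]
  rw [hsmooth, ftransform, ftransform,
    integral_integral_comp_add_mul_cexp_neg_inner hK_int hK_cont.stronglyMeasurable,
    hindep.charFun_map_sub_of_map_eq hε.aemeasurable hε'.aemeasurable hid, ← hφ_charFun,
    mul_assoc]

/-- For a continuous integrable kernel `K` and i.i.d. noises `ε, ε'` with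
characteristic function `φ`, the smoothed kernel `K̃_S(x) = E[K(x + ε − ε')]`
has Fourier transform `F(K̃_S)(ω) = F(K)(ω)·|φ(ω)|²`. -/
theorem stmt15 {Ω : Type*} [MeasurableSpace Ω] (μ : Measure Ω)
    [IsProbabilityMeasure μ] (D : ℕ)
    (K : EuclideanSpace ℝ (Fin D) → ℂ) (hK_cont : Continuous K)
    (hK_int : Integrable K)
    (ε ε' : Ω → EuclideanSpace ℝ (Fin D))
    (hε : Measurable ε) (hε' : Measurable ε')
    (hindep : ProbabilityTheory.IndepFun ε ε' μ)
    (hid : Measure.map ε μ = Measure.map ε' μ)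
    (φ : EuclideanSpace ℝ (Fin D) → ℂ)
    (hφ : ∀ ω : EuclideanSpace ℝ (Fin D),
      φ ω = ∫ a, Complex.exp (Complex.I * ((⟪ω, ε a⟫ : ℝ) : ℂ)) ∂μ)
    (hKS_int : Integrable (fun x : EuclideanSpace ℝ (Fin D) =>
      ∫ a, K (x + ε a - ε' a) ∂μ)) :
    ∀ ω : EuclideanSpace ℝ (Fin D),
      ftransform D (fun x => ∫ a, K (x + ε a - ε' a) ∂μ) ω
        = ftransform D K ω * ((‖φ ω‖ ^ 2 : ℝ) : ℂ) :=
  stmt15_general μ D K hK_cont hK_int ε ε' hε hε' hindep hid φ hφ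
end
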